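/- arXiv:2404.16649 — 3 statements merged into one kernel-verified Lean document; each statement's English description precedes it below -/
import Mathlib

section
/- If d/(1−α) < μ(s_in), where μ is the Monod function with μ_max, k_s > 0, then there exists a unique s* ∈ (0, s_in) with μ(s*) = d/(1−α), and x* = (s*, γ(1−α)(s_in − s*), γα(s_in − s*)) is an equilibrium of the system ṡ = −(1/γ)μ(s)e + d(s_in − s), ė = (1−α)μ(s)e − de, ḟ = αμ(s)e − df, with all components strictly positive. -/
theorem positive_equilibrium_exists_unique (γ α sin d μmax ks : ℝ)
    (hγ : 0 < γ) (hα : 0 < α) (hα1 : α < 1) (hsin : 0 < sin) (hd : 0 < d)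
    (hμmax : 0 < μmax) (hks : 0 < ks)
    (μ : ℝ → ℝ) (hdef : ∀ s, μ s = μmax * s / (ks + s))
    (hcond : d / (1 - α) < μ sin) :
    ∃! sstar : ℝ, sstar ∈ Set.Ioo 0 sin ∧ μ sstar = d / (1 - α) ∧
      (let estar := γ * (1 - α) * (sin - sstar);
       let fstar := γ * α * (sin - sstar);
       -(1/γ) * μ sstar * estar + d * (sin - sstar) = 0 ∧
       (1 - α) * μ sstar * estar - d * estar = 0 ∧
       α * μ sstar * estar - d * fstar = 0 ∧
       0 < sstar ∧ 0 < estar ∧ 0 < fstar) := by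
  have h1α : (0:ℝ) < 1 - α := by linarith
  set D := d / (1 - α) with hDdef
  have hD : 0 < D := div_pos hd h1α
  have hden : 0 < ks + sin := by linarith
  rw [hdef] at hcond
  have hcond' : D * (ks + sin) < μmax * sin := (lt_div_iff₀ hden).mp hcond
  have hDμ : D < μmax := by nlinarith
  have hμD : 0 < μmax - D := by linarith
  set s := ks * D / (μmax - D) with hsdef
  have hs0 : 0 < s := div_pos (mul_pos hks hD) hμD
  have hssin : s < sin := by
    rw [hsdef, div_lt_iff₀ hμD]
    nlinarith
  have hkss : 0 < ks + s := by linarith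
  have hμs : μ s = D := by
    rw [hdef, hsdef]
    field_simp
    ring
  have hDd : D * (1 - α) = d := by
    rw [hDdef, div_mul_cancel₀ _ h1α.ne']
  refine ⟨s, ⟨⟨hs0, hssin⟩, hμs, ?_, ?_, ?_, hs0, ?_, ?_⟩, ?_⟩
  · rw [hμs]
    have hγ1 : 1 / γ * γ = 1 := one_div_mul_cancel hγ.ne'
    linear_combination (-(D * (1 - α) * (sin - s))) * hγ1 + (-(sin - s)) * hDd
  · rw [hμs]; linear_combination (γ * (1 - α) * (sin - s)) * hDd
  · rw [hμs]; linear_combination (γ * α * (sin - s)) * hDd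
  · exact mul_pos (mul_pos hγ h1α) (by linarith)
  · exact mul_pos (mul_pos hγ hα) (by linarith)
  · rintro t ⟨⟨ht0, htsin⟩, hμt, -⟩
    rw [hdef] at hμt
    have hkt : 0 < ks + t := by linarith
    rw [div_eq_iff (ne_of_gt hkt)] at hμt
    rw [hsdef]
    rw [eq_div_iff (ne_of_gt hμD)]
    nlinarith
end

section
/- Let F = exp(AΔt) with A = [[−d, −μ*/γ, 0], [0, 0, 0], [0, αμ*, −d]], μ* = d/(1−α), Δt > 0, d > 0, γ > 0, 0 < α < 1, and C = (0, 0, 1). Then the pair (F, C) is detectable: there exists K ∈ ℝ³ such that every eigenvalue λ of F − K C satisfies |λ| < 1. In particular, K = (0, (1−α)/(4α), e^{−dΔt})ᵀ gives Sp(F − KC) = {e^{−dΔt}, (1 + e^{−dΔt/2})/2, (1 − e^{−dΔt/2})/2}. -/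
open Matrix

private lemma diag3 (a b c : ℝ) :
    Matrix.diagonal ![a,b,c] = !![a,0,0;0,b,0;0,0,c] := by
  ext i j; fin_cases i <;> fin_cases j <;>
    simp [Matrix.diagonal, Matrix.vecHead, Matrix.vecTail]

set_option maxHeartbeats 1000000 in
theorem pair_F_C_detectable (d γ α Δt : ℝ) (hd : 0 < d) (hγ : 0 < γ)
    (hα : 0 < α) (hα1 : α < 1) (hΔt : 0 < Δt)
    (μstar : ℝ) (hμ : μstar = d / (1 - α))
    (A : Matrix (Fin 3) (Fin 3) ℝ)
    (hA : A = !![-d, -μstar/γ, 0; 0, 0, 0; 0, α*μstar, -d])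
    (F : Matrix (Fin 3) (Fin 3) ℝ) (hF : F = NormedSpace.exp (Δt • A))
    (C : Matrix (Fin 1) (Fin 3) ℝ) (hC : C = !![0, 0, 1]) :
    (∃ K : Matrix (Fin 3) (Fin 1) ℝ, ∀ lam ∈ spectrum ℝ (F - K * C), |lam| < 1) ∧
    (∀ K : Matrix (Fin 3) (Fin 1) ℝ,
      K = !![0; (1-α)/(4*α); Real.exp (-d*Δt)] →
      spectrum ℝ (F - K * C) =
        {Real.exp (-d*Δt), (1 + Real.exp (-d*Δt/2))/2, (1 - Real.exp (-d*Δt/2))/2}) := by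
  have hd0 : d ≠ 0 := ne_of_gt hd
  have hγ0 : γ ≠ 0 := ne_of_gt hγ
  have hα0 : α ≠ 0 := ne_of_gt hα
  have h1α : (0:ℝ) < 1 - α := by linarith
  have h1α0 : (1:ℝ) - α ≠ 0 := ne_of_gt h1α
  set s : ℝ := Real.exp (-d*Δt) with hs
  set r : ℝ := Real.exp (-d*Δt/2) with hr
  have hs1 : s < 1 := by
    rw [hs]; apply Real.exp_lt_one_iff.mpr; nlinarith
  have hs0 : 0 < s := Real.exp_pos _
  have hr1 : r < 1 := by
    rw [hr]; apply Real.exp_lt_one_iff.mpr; nlinarith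
  have hr0 : 0 < r := Real.exp_pos _
  have hrs : r * r = s := by
    rw [hr, hs, ← Real.exp_add]; ring_nf
  subst hμ
  -- the conjugating matrices
  set S : Matrix (Fin 3) (Fin 3) ℝ :=
    !![1, -(1/(γ*(1-α))), 0; 0,1,0; 0, α/(1-α), 1] with hS
  set Si : Matrix (Fin 3) (Fin 3) ℝ :=
    !![1, 1/(γ*(1-α)), 0; 0,1,0; 0, -(α/(1-α)), 1] with hSi
  have hSSi : S * Si = 1 := by
    rw [hS, hSi, Matrix.mul_fin_three, Matrix.one_fin_three]
    norm_num
  have hSinv : S⁻¹ = Si := inv_eq_right_inv hSSi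
  have hdetS : S.det = 1 := by rw [hS, Matrix.det_fin_three]; simp [Matrix.vecHead, Matrix.vecTail]
  have hU : IsUnit S := (Matrix.isUnit_iff_isUnit_det S).mpr (hdetS ▸ isUnit_one)
  have hconj : Δt • A = S * Matrix.diagonal ![-(d*Δt), 0, -(d*Δt)] * Si := by
    rw [hA, diag3, hS, hSi, Matrix.mul_fin_three, Matrix.mul_fin_three]
    ext i j
    fin_cases i <;> fin_cases j <;>
      · try simp [Matrix.vecHead, Matrix.vecTail]
        try field_simp
        try ring
  have hFval : F = !![s, (s-1)/(γ*(1-α)), 0; 0, 1, 0; 0, (1-s)*α/(1-α), s] := by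
    rw [hF, hconj, ← hSinv, Matrix.exp_conj S _ hU, hSinv]
    rw [Matrix.exp_diagonal]
    have hv : NormedSpace.exp ![-(d*Δt), 0, -(d*Δt)] = ![s, 1, s] := by
      rw [Pi.exp_def]
      funext i
      fin_cases i <;>
        · simp [← Real.exp_eq_exp_ℝ, hs]
          try rw [neg_mul]
    rw [hv, diag3, hS, hSi, Matrix.mul_fin_three, Matrix.mul_fin_three]
    ext i j
    fin_cases i <;> fin_cases j <;>
      · try simp [Matrix.vecHead, Matrix.vecTail]
        try field_simp
        try ring
  -- the closed loop matrix for the given K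
  have key : ∀ K : Matrix (Fin 3) (Fin 1) ℝ,
      K = !![0; (1-α)/(4*α); s] →
      spectrum ℝ (F - K * C) = {s, (1 + r)/2, (1 - r)/2} := by
    intro K hK
    set M : Matrix (Fin 3) (Fin 3) ℝ :=
      !![s, (s-1)/(γ*(1-α)), 0; 0, 1, -((1-α)/(4*α)); 0, (1-s)*α/(1-α), 0] with hMdef
    have hM : F - K * C = M := by
      rw [hFval, hK, hC, hMdef]
      ext i j
      fin_cases i <;> fin_cases j <;>
        simp [Matrix.mul_apply, Fin.sum_univ_one, Matrix.vecHead, Matrix.vecTail]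
    rw [hM]
    ext lam
    have hmem : lam ∈ spectrum ℝ M ↔
        (Matrix.diagonal (fun _ => lam) - M).det = 0 := by
      rw [spectrum.mem_iff, Matrix.isUnit_iff_isUnit_det, isUnit_iff_ne_zero, not_ne_iff,
        algebraMap_eq_diagonal, Pi.algebraMap_def]
      simp only [Algebra.algebraMap_self, RingHom.id_apply]
    have hdg : (Matrix.diagonal (fun _ => lam) : Matrix (Fin 3) (Fin 3) ℝ) =
        !![lam,0,0;0,lam,0;0,0,lam] := by
      have h0 : (fun _ => lam : Fin 3 → ℝ) = ![lam, lam, lam] := by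
        funext i; fin_cases i <;> rfl
      rw [h0, diag3]
    have hdet : (Matrix.diagonal (fun _ => lam) - M).det
        = (lam - s) * (lam - (1+r)/2) * (lam - (1-r)/2) := by
      rw [hdg, hMdef]
      have hsub : !![lam,0,0;0,lam,0;0,0,lam] -
          !![s, (s-1)/(γ*(1-α)), 0; 0, 1, -((1-α)/(4*α)); 0, (1-s)*α/(1-α), 0] =
          !![lam - s, -((s-1)/(γ*(1-α))), 0; 0, lam - 1, (1-α)/(4*α); 0, -((1-s)*α/(1-α)), lam] := by
        ext i j
        fin_cases i <;> fin_cases j <;>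
          · try simp [Matrix.vecHead, Matrix.vecTail]
            try ring
      rw [hsub, Matrix.det_fin_three]
      try simp [Matrix.vecHead, Matrix.vecTail]
      have h4 : ((1-α)/(4*α))*((1-s)*α/(1-α)) = (1-s)/4 := by
        field_simp
      linear_combination (lam - s) * h4 + ((lam - s)/4) * hrs
    rw [hmem, hdet]
    simp only [Set.mem_insert_iff, Set.mem_singleton_iff, mul_eq_zero, sub_eq_zero, or_assoc]
  constructor
  · refine ⟨!![0; (1-α)/(4*α); s], ?_⟩
    intro lam hlam
    rw [key _ rfl] at hlam
    simp only [Set.mem_insert_iff, Set.mem_singleton_iff] at hlam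
    rcases hlam with h | h | h <;> rw [h, abs_lt] <;> constructor <;> nlinarith
  · intro K hK
    rw [key K hK]
end

section
/- Given a growth rate function μ depending only on s, if both the fluorescence f(t) and its derivative ḟ(t) are known, then on the conservation manifold the full state is determined: s = s_in − f/(αγ), e = (ḟ + df)/(α μ(s)) whenever μ(s) ≠ 0. In particular the map (f, ḟ) ↦ (s, e, f) is well-defined and injective on the region where μ(s_in − f/(αγ)) > 0. -/
theorem state_determined_by_f_and_fdot (γ α d sin : ℝ)
    (hγ : 0 < γ) (hα : 0 < α) (hα1 : α < 1) (hd : 0 < d) (hsin : 0 < sin)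
    (μ : ℝ → ℝ) :
    (∀ s e f fdot : ℝ,
      s + f / (α * γ) = sin →
      fdot = α * μ s * e - d * f →
      μ s ≠ 0 →
      s = sin - f / (α * γ) ∧ e = (fdot + d * f) / (α * μ s)) ∧
    Set.InjOn
      (fun p : ℝ × ℝ =>
        (sin - p.1 / (α * γ),
         (p.2 + d * p.1) / (α * μ (sin - p.1 / (α * γ))),
         p.1))
      {p : ℝ × ℝ | 0 < μ (sin - p.1 / (α * γ))} := by
  constructor
  · intro s e f fdot hcons hf hμ
    constructor
    · linarith
    · rw [hf]
      field_simp [mul_ne_zero hα.ne' hμ]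
      ring
  · intro p hp q hq h
    have h1 : p.1 = q.1 := congrArg (fun t : ℝ × ℝ × ℝ => t.2.2) h
    have h2 : (p.2 + d * p.1) / (α * μ (sin - p.1 / (α * γ)))
        = (q.2 + d * q.1) / (α * μ (sin - q.1 / (α * γ))) :=
      congrArg (fun t : ℝ × ℝ × ℝ => t.2.1) h
    rw [h1] at h2
    have hμq : (0:ℝ) < μ (sin - q.1 / (α * γ)) := hq
    have hne : α * μ (sin - q.1 / (α * γ)) ≠ 0 := by positivity
    have h3 : p.2 + d * q.1 = q.2 + d * q.1 :=
      by
        have := (div_left_inj' hne).mp h2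
        linarith
    exact Prod.ext h1 (by linarith)
end
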